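/- arXiv:math/9402216 — 5 statements merged into one kernel-verified Lean document; each statement's English description precedes it below -/
import Mathlib

section
/- The multiplication law for brackets: [F₁(z)·F₂(z)] (G₁(z)·G₂(z)) = Σ_k ([F₁(z)·z^k] G₁(z)) · ([F₂(z)·z^{-k}] G₂(z)), where the sum over integers k has only finitely many nonzero terms. -/
/-!
Both sides are the same finite sum over `ℤ³`. Expanding the Cauchy products, the left-hand side
is `Σ_{N,j,i} F₁ⱼ F₂_{N-j} G₁ᵢ G₂_{N-i}` and the right-hand side is
`Σ_{k,n,m} F₁_{n-k} G₁ₙ F₂_{m+k} G₂ₘ`; the substitution `(k, n, m) = (i - j, i, N - i)` matches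
the terms. Since the `F`'s have supports bounded above and the `G`'s supports bounded below,
every sum involved, including the triple one, has finitely many nonzero terms.
-/

/-- A formal Laurent series (as coefficient function): finitely many negative-power terms. -/
def IsLSeries {R : Type*} [CommRing R] (f : ℤ → R) : Prop :=
  ∃ N : ℤ, ∀ n < N, f n = 0

/-- A reverse formal Laurent series: finitely many positive-power terms. -/
def IsRSeries {R : Type*} [CommRing R] (f : ℤ → R) : Prop :=
  ∃ N : ℤ, ∀ n > N, f n = 0

/-- The bracket `[F(z)] G(z) = Σₙ fₙ gₙ`. -/
noncomputable def bracket {R : Type*} [CommRing R] (f g : ℤ → R) : R :=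
  ∑ᶠ n : ℤ, f n * g n

/-- Product of two series, coefficientwise: `(f·g)ₙ = Σⱼ fⱼ g_{n-j}`. -/
noncomputable def seriesMul {R : Type*} [CommRing R] (f g : ℤ → R) : ℤ → R :=
  fun n => ∑ᶠ j : ℤ, f j * g (n - j)

open Function Set

theorem finsum_mul_finsum {α β R : Type*} [NonUnitalNonAssocSemiring R] {f : α → R} {g : β → R}
    (hf : HasFiniteSupport f) (hg : HasFiniteSupport g) :
    (∑ᶠ a, f a) * ∑ᶠ b, g b = ∑ᶠ p : α × β, f p.1 * g p.2 := by
  have hfg : HasFiniteSupport fun p : α × β => f p.1 * g p.2 :=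
    (hf.prod hg).subset fun p hp => ⟨left_ne_zero_of_mul hp, right_ne_zero_of_mul hp⟩
  rw [finsum_mul' _ _ hf, finsum_curry _ hfg]
  exact finsum_congr fun a => mul_finsum' _ _ hg

section Series

variable {R : Type*} [CommRing R] {f g : ℤ → R}

theorem IsRSeries.bddAbove_support (hf : IsRSeries f) : BddAbove (support f) := by
  obtain ⟨N, hN⟩ := hf
  exact ⟨N, fun n hn => not_lt.1 fun h => hn (hN n h)⟩

theorem IsLSeries.bddBelow_support (hf : IsLSeries f) : BddBelow (support f) := by
  obtain ⟨N, hN⟩ := hf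
  exact ⟨N, fun n hn => not_lt.1 fun h => hn (hN n h)⟩

theorem IsRSeries.comp_sub_const (hf : IsRSeries f) (k : ℤ) : IsRSeries fun n => f (n - k) := by
  obtain ⟨N, hN⟩ := hf
  exact ⟨N + k, fun n hn => hN _ (by omega)⟩

theorem IsRSeries.comp_add_const (hf : IsRSeries f) (k : ℤ) : IsRSeries fun n => f (n + k) := by
  obtain ⟨N, hN⟩ := hf
  exact ⟨N - k, fun n hn => hN _ (by omega)⟩

theorem IsRSeries.comp_const_sub (hf : IsRSeries f) (N : ℤ) : IsLSeries fun n => f (N - n) := by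
  obtain ⟨M, hM⟩ := hf
  exact ⟨N - M, fun n hn => hM _ (by omega)⟩

theorem IsLSeries.comp_const_sub (hf : IsLSeries f) (N : ℤ) : IsRSeries fun n => f (N - n) := by
  obtain ⟨M, hM⟩ := hf
  exact ⟨N - M, fun n hn => hM _ (by omega)⟩

theorem IsRSeries.hasFiniteSupport_mul (hf : IsRSeries f) (hg : IsLSeries g) :
    HasFiniteSupport fun n => f n * g n :=
  (hg.bddBelow_support.mono (support_mul_subset_right f g)).finite_of_bddAbove
    (hf.bddAbove_support.mono (support_mul_subset_left f g))

theorem IsLSeries.hasFiniteSupport_mul (hf : IsLSeries f) (hg : IsRSeries g) :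
    HasFiniteSupport fun n => f n * g n := by
  simpa only [mul_comm] using hg.hasFiniteSupport_mul hf

def bracketMulSummand (F₁ F₂ G₁ G₂ : ℤ → R) (q : ℤ × ℤ × ℤ) : R :=
  F₁ (q.2.1 - q.1) * G₁ q.2.1 * (F₂ (q.2.2 + q.1) * G₂ q.2.2)

theorem hasFiniteSupport_bracketMulSummand {F₁ F₂ G₁ G₂ : ℤ → R} (hF₁ : IsRSeries F₁)
    (hF₂ : IsRSeries F₂) (hG₁ : IsLSeries G₁) (hG₂ : IsLSeries G₂) :
    HasFiniteSupport (bracketMulSummand F₁ F₂ G₁ G₂) := by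
  obtain ⟨N₁, hN₁⟩ := hF₁.bddAbove_support
  obtain ⟨N₂, hN₂⟩ := hF₂.bddAbove_support
  obtain ⟨M₁, hM₁⟩ := hG₁.bddBelow_support
  obtain ⟨M₂, hM₂⟩ := hG₂.bddBelow_support
  refine ((finite_Icc (M₁ - N₁) (N₂ - M₂)).prod
    ((finite_Icc M₁ (N₁ + N₂ - M₂)).prod (finite_Icc M₂ (N₁ + N₂ - M₁)))).subset ?_
  rintro ⟨k, n, m⟩ hq
  have h₁ := left_ne_zero_of_mul hq
  have h₂ := right_ne_zero_of_mul hq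
  have : n - k ≤ N₁ := hN₁ (left_ne_zero_of_mul h₁)
  have : M₁ ≤ n := hM₁ (right_ne_zero_of_mul h₁)
  have : m + k ≤ N₂ := hN₂ (left_ne_zero_of_mul h₂)
  have : M₂ ≤ m := hM₂ (right_ne_zero_of_mul h₂)
  simp only [mem_prod, mem_Icc]
  omega

end Series

def bracketMulIndexEquiv : ℤ × ℤ × ℤ ≃ ℤ × ℤ × ℤ where
  toFun p := (p.2.2 - p.2.1, p.2.2, p.1 - p.2.2)
  invFun q := (q.2.1 + q.2.2, q.2.1 - q.1, q.2.1)
  left_inv := by rintro ⟨N, j, i⟩; ext <;> dsimp only <;> omega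
  right_inv := by rintro ⟨k, n, m⟩; ext <;> dsimp only <;> omega

/-- `F₁(z)·z^k` has coefficient function `n ↦ F₁ (n - k)`. -/
theorem bracket_mul_law {R : Type*} [CommRing R] (F₁ F₂ G₁ G₂ : ℤ → R)
    (hF₁ : IsRSeries F₁) (hF₂ : IsRSeries F₂) (hG₁ : IsLSeries G₁) (hG₂ : IsLSeries G₂) :
    bracket (seriesMul F₁ F₂) (seriesMul G₁ G₂)
      = ∑ᶠ k : ℤ, bracket (fun n => F₁ (n - k)) G₁ * bracket (fun n => F₂ (n + k)) G₂ := by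
  set Ψ := bracketMulSummand F₁ F₂ G₁ G₂
  have hΨ : HasFiniteSupport Ψ := hasFiniteSupport_bracketMulSummand hF₁ hF₂ hG₁ hG₂
  have hΨe : HasFiniteSupport (Ψ ∘ bracketMulIndexEquiv) :=
    hΨ.comp_of_injective bracketMulIndexEquiv.injective
  calc bracket (seriesMul F₁ F₂) (seriesMul G₁ G₂)
      = ∑ᶠ (N : ℤ) (p : ℤ × ℤ), Ψ (bracketMulIndexEquiv (N, p)) := by
        refine finsum_congr fun N => ?_
        rw [seriesMul, seriesMul,
          finsum_mul_finsum (hF₁.hasFiniteSupport_mul (hF₂.comp_const_sub N))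
            (hG₁.hasFiniteSupport_mul (hG₂.comp_const_sub N))]
        refine finsum_congr fun ⟨j, i⟩ => ?_
        simp only [Ψ, bracketMulSummand, bracketMulIndexEquiv, Equiv.coe_fn_mk, sub_sub_cancel,
          sub_add_sub_cancel]
        ring
    _ = ∑ᶠ p, Ψ (bracketMulIndexEquiv p) := (finsum_curry _ hΨe).symm
    _ = ∑ᶠ q, Ψ q := finsum_comp_equiv _
    _ = ∑ᶠ (k : ℤ) (p : ℤ × ℤ), Ψ (k, p) := finsum_curry _ hΨ
    _ = _ := finsum_congr fun k => (finsum_mul_finsum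
          ((hF₁.comp_sub_const k).hasFiniteSupport_mul hG₁)
          ((hF₂.comp_add_const k).hasFiniteSupport_mul hG₂)).symm
end

section
/- Saalschütz-type binomial identity: for nonnegative integers k, l, m, n, Σ_r C(m, k-r)·C(n, l-r)·C(m+n+r, r) = C(m+l, k)·C(n+k, l). -/
/-!
Vandermonde splits `C(m+n+r, r) = Σ_j C(n+k, j) C(m-(k-r), r-j)` (the subtraction `m-(k-r)` does
not truncate whenever `C(m, k-r) ≠ 0`), and trinomial revision turns `C(m, k-r) C(m-(k-r), r-j)` into
`C(m, k-j) C(k-j, r-j)`. After exchanging the sums over `r` and `j`, the sum over `r` is again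
Vandermonde and gives `C(n+k-j, l-j)`; trinomial revision
`C(n+k, j) C(n+k-j, l-j) = C(n+k, l) C(l, j)` and a last Vandermonde sum
`Σ_j C(l, j) C(m, k-j) = C(m+l, k)` finish.
-/

open Finset

namespace Nat

theorem sum_range_min_choose_mul_choose (a b n : ℕ) :
    ∑ s ∈ range (min a b + 1), a.choose s * n.choose (b - s) = (a + n).choose b := by
  rw [add_choose_eq, Finset.Nat.sum_antidiagonal_eq_sum_range_succ_mk]
  refine sum_subset (range_subset_range.mpr (by omega)) fun s hs hs' ↦ ?_
  rw [mem_range] at hs hs'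
  rw [choose_eq_zero_of_lt (by omega), zero_mul]

theorem choose_sub_mul_choose_add_eq_sum {k r : ℕ} (hr : r ≤ k) (m n : ℕ) :
    m.choose (k - r) * (m + n + r).choose r =
      ∑ j ∈ range (r + 1), (n + k).choose j * (m.choose (k - j) * (k - j).choose (r - j)) := by
  by_cases hm : k - r ≤ m
  · rw [show m + n + r = (n + k) + (m - (k - r)) by omega, add_choose_eq,
      Finset.Nat.sum_antidiagonal_eq_sum_range_succ_mk, mul_sum]
    refine sum_congr rfl fun j hj ↦ ?_
    have hj : j ≤ r := mem_range_succ_iff.mp hj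
    rw [← choose_symm_of_eq_add (show k - j = (k - r) + (r - j) by omega), ← mul_assoc,
      choose_mul (by omega), show k - j - (k - r) = r - j by omega]
    ring
  · rw [choose_eq_zero_of_lt (by omega), zero_mul]
    refine (sum_eq_zero fun j hj ↦ ?_).symm
    have hj : j ≤ r := mem_range_succ_iff.mp hj
    rw [choose_eq_zero_of_lt (n := m) (by omega), zero_mul, mul_zero]

theorem sum_Ico_choose_sub_mul_choose_sub {j k l : ℕ} (hj : j ≤ min k l) (n : ℕ) :
    ∑ r ∈ Ico j (min k l + 1), (k - j).choose (r - j) * n.choose (l - r) =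
      (k - j + n).choose (l - j) := by
  rw [sum_Ico_eq_sum_range, show min k l + 1 - j = min (k - j) (l - j) + 1 by omega,
    ← sum_range_min_choose_mul_choose]
  refine sum_congr rfl fun s _ ↦ ?_
  rw [Nat.add_sub_cancel_left, Nat.sub_add_eq]

end Nat

open Nat

/-- Saalschütz-type binomial identity:
`Σ_r C(m, k-r)·C(n, l-r)·C(m+n+r, r) = C(m+l, k)·C(n+k, l)`.
The sum over all integers `r` has nonzero terms only for `0 ≤ r ≤ min k l`. -/
theorem saalschuetz_type (k l m n : ℕ) :
    ∑ r ∈ Finset.range (min k l + 1),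
      m.choose (k - r) * n.choose (l - r) * (m + n + r).choose r
    = (m + l).choose k * (n + k).choose l := by
  calc ∑ r ∈ range (min k l + 1), m.choose (k - r) * n.choose (l - r) * (m + n + r).choose r
      = ∑ r ∈ range (min k l + 1), ∑ j ∈ range (r + 1),
          (n + k).choose j * m.choose (k - j) * ((k - j).choose (r - j) * n.choose (l - r)) := by
        refine sum_congr rfl fun r hr ↦ ?_
        have hr : r ≤ min k l := mem_range_succ_iff.mp hr
        rw [mul_right_comm, choose_sub_mul_choose_add_eq_sum (by omega), sum_mul]
        exact sum_congr rfl fun j _ ↦ by ring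
    _ = ∑ j ∈ range (min k l + 1),
          (n + k).choose j * m.choose (k - j) * (k - j + n).choose (l - j) := by
        simp_rw [range_eq_Ico]
        rw [← sum_Ico_Ico_comm]
        refine sum_congr rfl fun j hj ↦ ?_
        have hj : j ≤ min k l := Nat.lt_succ_iff.mp (mem_Ico.mp hj).2
        rw [← mul_sum, sum_Ico_choose_sub_mul_choose_sub hj]
    _ = (n + k).choose l * ∑ j ∈ range (min l k + 1), l.choose j * m.choose (k - j) := by
        rw [mul_sum, min_comm]
        refine sum_congr rfl fun j hj ↦ ?_
        have hj : j ≤ min l k := mem_range_succ_iff.mp hj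
        rw [show k - j + n = n + k - j by omega, mul_right_comm,
          ← choose_mul (n := n + k) (k := l) (s := j) (by omega)]
        ring
    _ = (m + l).choose k * (n + k).choose l := by
        rw [sum_range_min_choose_mul_choose, add_comm l, mul_comm]
end

section
/- Coefficient of a power of a difference over a power of (1-wz): for nonnegative integers l, m, n, [w^{l+n} z^{m+n}] ((w-z)^{l+m} / (1-wz)^{l+m+1}) = (-1)^m (l+m+n)!/(l!·m!·n!). -/
/-!
Only the monomial `w^l (-z)^m` of `(w - z)^{l+m}` times the monomial `C(l+m+n, n) (wz)^n` of
`1/(1 - wz)^{l+m+1}` contributes to `w^{l+n} z^{m+n}`, so the coefficient is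
`(-1)^m C(l+m, l) C(l+m+n, n)`, which is the multinomial coefficient `(l+m+n)!/(l! m! n!)`.
-/

open PowerSeries

open Nat in
theorem Nat.choose_mul_add_choose_mul_factorial_mul_factorial_mul_factorial (l m n : ℕ) :
    (l + m).choose l * (l + m + n).choose n * (l ! * m ! * n !) = (l + m + n)! := by
  rw [← Nat.add_choose_mul_factorial_mul_factorial (l + m) n,
    ← Nat.add_choose_mul_factorial_mul_factorial l m, Nat.choose_symm_add]
  ring

theorem PowerSeries.coeff_X_sub_C_pow {R : Type*} [CommRing R] (a : R) (N i : ℕ) :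
    coeff i ((X - C a) ^ N) = (-a) ^ (N - i) * (N.choose i : R) := by
  rw [sub_eq_add_neg, ← map_neg, ← Polynomial.coe_X, ← Polynomial.coe_C, ← Polynomial.coe_add,
    ← Polynomial.coe_pow, Polynomial.coeff_coe, Polynomial.coeff_X_add_C_pow]

theorem PowerSeries.coeff_coeff_X_sub_C_X_pow_mul_smul_X_pow {R : Type*} [CommRing R]
    (N i j q : ℕ) (r : R) :
    coeff q (coeff i ((X - C (X : R⟦X⟧)) ^ N) * r • X ^ j)
      = if q = N - i + j then (-1) ^ (N - i) * N.choose i * r else 0 := by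
  have monomial : coeff i ((X - C (X : R⟦X⟧)) ^ N) * r • X ^ j
      = C ((-1) ^ (N - i) * N.choose i * r) * X ^ (N - i + j) := by
    rw [coeff_X_sub_C_pow, smul_eq_C_mul]
    simp only [map_mul, map_pow, map_neg, map_one, map_natCast]
    ring
  rw [monomial, coeff_C_mul_X_pow]

/-- Here `w` is the outer `X` and `z = C X` the inner one, and `mk fun k => C(l+m+k, k) • X ^ k`
is the expansion of `1/(1-wz)^{l+m+1}`. -/
theorem coeff_diff_pow_div (l m n : ℕ) :
    PowerSeries.coeff (R := ℚ) (m + n) (PowerSeries.coeff (R := PowerSeries ℚ) (l + n)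
      ((PowerSeries.X - PowerSeries.C (R := PowerSeries ℚ) PowerSeries.X) ^ (l + m)
        * PowerSeries.mk fun k => (((l + m + k).choose k : ℚ)) • PowerSeries.X ^ k))
      = (-1) ^ m * (l + m + n).factorial / (l.factorial * m.factorial * n.factorial) := by
  rw [coeff_mul, map_sum, Finset.sum_eq_single_of_mem (l, n) (by simp)]
  · rw [coeff_mk, coeff_coeff_X_sub_C_X_pow_mul_smul_X_pow, if_pos (by omega),
      Nat.add_sub_cancel_left, eq_div_iff (by positivity)]
    have multinomial := congrArg (Nat.cast (R := ℚ))
      (Nat.choose_mul_add_choose_mul_factorial_mul_factorial_mul_factorial l m n)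
    push_cast at multinomial
    linear_combination (-1) ^ m * multinomial
  · rintro ⟨i, j⟩ hij hne
    rw [coeff_mk, coeff_coeff_X_sub_C_X_pow_mul_smul_X_pow, if_neg]
    rw [Finset.HasAntidiagonal.mem_antidiagonal] at hij
    contrapose! hne
    simp only [Prod.ext_iff] at hij hne ⊢
    omega
end

section
/- Lagrange inversion in bracket form: let F(z) = f₁z + f₂z² + ··· be a formal power series with zero constant term and f₁ invertible, and let G be its compositional inverse, so F(G(z)) = G(F(z)) = z. Then for all integers m and n: n·[z^n] G(z)^m = m·[z^{-m}] F(z)^{-n}. -/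
/-- Composition `G ∘ F` of formal power series (substituting `F`, with zero constant term,
into `G`): the coefficient of `z^n` is `Σ_{k ≤ n} ([z^k]G)·[z^n](F^k)`. -/
noncomputable def psComp {K : Type*} [CommRing K] (G F : PowerSeries K) : PowerSeries K :=
  PowerSeries.mk fun n =>
    ∑ k ∈ Finset.range (n + 1), PowerSeries.coeff k G * PowerSeries.coeff n (F ^ k)

/-!
In the field of Laurent series write `res h` for the coefficient of `z⁻¹` in `h`. The residue
of a derivative vanishes, and for `f = F(z)` one has `res (f^k f') = [k = -1]` for every integer
`k`: writing `f = z u`, for `k ≤ -2` this is the identity `[z^{j+1}] T^{j+1} = [z^j] T^j T'` for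
`T = u⁻¹`, which holds over every commutative ring because it holds for the generic series over
`ℤ[w₀, w₁, …]`, a domain of characteristic zero.

Write `G = z U`. Since `U(F(z)) = z / f`, substituting `F` into `U^m = Σ_k ([z^k] U^m) z^k`
gives `z^m f^{-m} = Σ_k ([z^k] U^m) f^k` up to any given order, so the previous fact yields
`[z^n] G^m = [z^{n-m}] U^m = res (z^m f^{-n-1} f')`. Finally `res (z^m f^{-n})' = 0` reads
`m [z^{-m}] f^{-n} = n res (z^m f^{-n-1} f')`.
-/

open PowerSeries HahnSeries LaurentSeries

namespace PowerSeries

variable {R : Type*} [CommRing R]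

theorem exists_eq_X_mul_unit {F : R⟦X⟧} (h0 : constantCoeff F = 0) (h1 : IsUnit (coeff 1 F)) :
    ∃ U : R⟦X⟧ˣ, F = X * (U : R⟦X⟧) := by
  obtain ⟨V, rfl⟩ := X_dvd_iff.2 h0
  exact ⟨(isUnit_iff_constantCoeff.2 (by simpa using h1)).unit, rfl⟩

theorem map_derivative {S : Type*} [CommRing S] (φ : R →+* S) (W : R⟦X⟧) :
    map φ (d⁄dX R W) = d⁄dX S (map φ W) := by
  ext n
  simp [coeff_derivative]

theorem coeff_succ_pow_succ_eq_coeff_pow_mul_derivative_of_charZero {A : Type*} [CommRing A]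
    [IsDomain A] [CharZero A] (W : A⟦X⟧) (j : ℕ) :
    coeff (j + 1) (W ^ (j + 1)) = coeff j (W ^ j * d⁄dX A W) := by
  have h := congrArg (coeff j) ((d⁄dX A).leibniz_pow W (j + 1))
  rw [coeff_derivative, map_nsmul, Nat.add_sub_cancel, smul_eq_mul, nsmul_eq_mul] at h
  refine mul_right_cancel₀ (Nat.cast_add_one_ne_zero j) ?_
  rw [h]
  push_cast
  ring

theorem coeff_succ_pow_succ_eq_coeff_pow_mul_derivative (W : R⟦X⟧) (j : ℕ) :
    coeff (j + 1) (W ^ (j + 1)) = coeff j (W ^ j * d⁄dX R W) := by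
  let W₀ : (MvPolynomial ℕ ℤ)⟦X⟧ := mk MvPolynomial.X
  let ψ : MvPolynomial ℕ ℤ →+* R := MvPolynomial.eval₂Hom (Int.castRingHom R) (coeff · W)
  have hW : map ψ W₀ = W := by ext i; simp [W₀, ψ]
  rw [← hW, ← map_pow, ← map_pow, ← map_derivative, ← map_mul, coeff_map, coeff_map,
    coeff_succ_pow_succ_eq_coeff_pow_mul_derivative_of_charZero]

theorem coeff_succ_zpow_add_coeff_zpow_mul_derivative (U : R⟦X⟧ˣ) (s : ℕ) :
    coeff (s + 1) ((U ^ (-((s : ℤ) + 1)) : R⟦X⟧ˣ) : R⟦X⟧) +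
      coeff s (((U ^ (-((s : ℤ) + 2)) : R⟦X⟧ˣ) : R⟦X⟧) * d⁄dX R ↑U) = 0 := by
  have hpow : ∀ j : ℕ, U ^ (-((j : ℤ) + 1)) = U⁻¹ ^ (j + 1) := fun j => by
    rw [← zpow_natCast, inv_zpow', Nat.cast_succ]
  rw [hpow, show -((s : ℤ) + 2) = -(((s + 1 : ℕ) : ℤ) + 1) by push_cast; ring, hpow,
    Units.val_pow_eq_pow_val, Units.val_pow_eq_pow_val,
    show (↑U⁻¹ : R⟦X⟧) ^ (s + 1 + 1) * d⁄dX R ↑U = -((↑U⁻¹ : R⟦X⟧) ^ s * d⁄dX R ↑U⁻¹) by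
      rw [derivative_inv]; ring,
    map_neg, coeff_succ_pow_succ_eq_coeff_pow_mul_derivative, add_neg_cancel]

theorem subst_eq_sum_add_pow_mul {F : R⟦X⟧} (hF : HasSubst F) (P : R⟦X⟧) (n : ℕ) :
    P.subst F = ∑ i ∈ Finset.range n, C (coeff i P) * F ^ i +
      F ^ n * (mk fun i => coeff (i + n) P).subst F := by
  conv_lhs => rw [eq_X_pow_mul_shift_add_trunc n P]
  rw [subst_add hF, subst_mul hF, subst_pow hF, subst_X hF, subst_coe hF, Polynomial.aeval_def,
    eval₂_trunc_eq_sum_range, algebraMap_eq, add_comm]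

end PowerSeries

theorem psComp_eq_subst {R : Type*} [CommRing R] {F : R⟦X⟧} (hF : constantCoeff F = 0)
    (G : R⟦X⟧) : psComp G F = G.subst F := by
  ext n
  rw [coeff_subst' (HasSubst.of_constantCoeff_zero' hF),
    finsum_eq_sum_of_support_subset _ (s := Finset.range (n + 1)) ?_]
  · simp [psComp, smul_eq_mul]
  · intro d hd
    by_contra h
    simp only [Finset.coe_range, Set.mem_Iio, not_lt] at h
    have : X ^ d ∣ F ^ d := pow_dvd_pow_of_dvd (X_dvd_iff.2 hF) d
    exact Function.mem_support.1 hd (by simp only [X_pow_dvd_iff.1 this n (by omega), smul_zero])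

theorem coeff_one_psComp {R : Type*} [CommRing R] (G F : R⟦X⟧) :
    coeff 1 (psComp G F) = coeff 1 G * coeff 1 F := by
  simp [psComp, Finset.sum_range_succ]

theorem MonoidHom.map_units_zpow {M G₀ : Type*} [Monoid M] [GroupWithZero G₀] (φ : M →* G₀)
    (u : Mˣ) (m : ℤ) : φ ↑(u ^ m) = φ ↑u ^ m := by
  rw [← Units.coe_map, map_zpow, Units.val_zpow_eq_zpow_val, Units.coe_map]

namespace LaurentSeries

section Derivative

variable {R : Type*} [CommRing R]

theorem coeff_derivative (f : R⸨X⸩) (n : ℤ) :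
    (derivative R f).coeff n = (n + 1) * f.coeff (n + 1) := by
  simp [zsmul_eq_mul]

theorem coeff_derivative_neg_one (f : R⸨X⸩) : (derivative R f).coeff (-1) = 0 := by
  simp

theorem derivative_single (k : ℤ) (c : R) :
    derivative R (single k c) = single (k - 1) (k * c) := by
  simp [zsmul_eq_mul]

theorem derivative_single_mul (k : ℤ) (c : R) (h : R⸨X⸩) :
    derivative R (single k c * h) =
      derivative R (single k c) * h + single k c * derivative R h := by
  ext n
  simp only [coeff_derivative, HahnSeries.coeff_add, derivative_single, coeff_single_mul,
    show n - (k - 1) = n + 1 - k by ring, show n - k + 1 = n + 1 - k by ring]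
  push_cast
  ring

theorem derivative_coe (P : R⟦X⟧) : derivative R (P : R⸨X⸩) = (d⁄dX R P : R⸨X⸩) := by
  ext n
  rw [coeff_derivative]
  rcases n with k | _ | k
  · rw [Int.ofNat_eq_natCast, show (k : ℤ) + 1 = ((k + 1 : ℕ) : ℤ) by push_cast; ring,
      coeff_coe_powerSeries, coeff_coe_powerSeries, PowerSeries.coeff_derivative]
    push_cast
    ring
  · simp [coeff_coe]
  · rw [coeff_coe, coeff_coe, if_pos (by omega), if_pos (by omega), mul_zero]

theorem derivative_mul (a b : R⸨X⸩) :
    derivative R (a * b) = a * derivative R b + b * derivative R a := by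
  rw [← single_order_mul_powerSeriesPart a, ← single_order_mul_powerSeriesPart b]
  generalize a.order = p, b.order = q, a.powerSeriesPart = A, b.powerSeriesPart = B
  have hs : single (p + q) (1 : R) = single p 1 * single q 1 := by rw [single_mul_single, mul_one]
  rw [show single p (1 : R) * (A : R⸨X⸩) * (single q 1 * (B : R⸨X⸩)) =
      single (p + q) 1 * ((A * B : R⟦X⟧) : R⸨X⸩) by rw [hs, coe_mul]; ring,
    derivative_single_mul, hs, derivative_single_mul, derivative_single_mul,
    derivative_single_mul, derivative_coe, derivative_coe, derivative_coe, Derivation.leibniz,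
    smul_eq_mul, smul_eq_mul]
  simp only [map_add, map_mul]
  ring

/-- Stated over `ℤ`: the `R`-algebra structure on `R⸨X⸩` found by instance search
(`HahnSeries.powerSeriesAlgebra`) does not act coefficientwise up to definitional unfolding. -/
noncomputable def derivation : Derivation ℤ R⸨X⸩ R⸨X⸩ where
  toFun := derivative R
  map_add' := map_add _
  map_smul' n a := by
    rw [Algebra.smul_def, eq_intCast, ← zsmul_eq_mul, RingHom.id_apply]
    exact map_zsmul (derivative R) n a
  map_one_eq_zero' := by
    change derivative R (single 0 1) = 0
    rw [derivative_single]
    simp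
  leibniz' := derivative_mul

theorem derivation_apply (f : R⸨X⸩) : derivation f = derivative R f := rfl

end Derivative

theorem coeff_coe_of_neg {R : Type*} [Semiring R] (P : R⟦X⟧) {j : ℤ} (hj : j < 0) :
    (P : R⸨X⸩).coeff j = 0 := by
  rw [coeff_coe, if_pos hj]

variable {K : Type*} [Field K]

theorem coe_unit_zpow (U : K⟦X⟧ˣ) (k : ℤ) :
    ((U : K⟦X⟧) : K⸨X⸩) ^ k = ((↑(U ^ k) : K⟦X⟧) : K⸨X⸩) :=
  (MonoidHom.map_units_zpow (ofPowerSeries ℤ K : K⟦X⟧ →* K⸨X⸩) U k).symm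

theorem coe_ne_zero_of_coeff_one_ne_zero {F : K⟦X⟧} (hF1 : coeff 1 F ≠ 0) :
    (F : K⸨X⸩) ≠ 0 := by
  rw [Ne, ← coeff_coe_powerSeries] at hF1
  exact ne_of_apply_ne (HahnSeries.coeff · ((1 : ℕ) : ℤ)) hF1

theorem coeff_neg_one_zpow_mul_derivative {F : K⟦X⟧} (hF0 : constantCoeff F = 0)
    (hF1 : coeff 1 F ≠ 0) (k : ℤ) :
    ((F : K⸨X⸩) ^ k * derivative K (F : K⸨X⸩)).coeff (-1) = if k = -1 then 1 else 0 := by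
  obtain ⟨U, rfl⟩ := exists_eq_X_mul_unit hF0 hF1.isUnit
  have hU0 : ((U : K⟦X⟧) : K⸨X⸩) ≠ 0 :=
    (map_ne_zero_iff _ ofPowerSeries_injective).2 U.ne_zero
  have hsplit : ((X * (U : K⟦X⟧) : K⟦X⟧) : K⸨X⸩) ^ k *
      derivative K ((X * (U : K⟦X⟧) : K⟦X⟧) : K⸨X⸩) =
      single k 1 * ((↑(U ^ (k + 1)) : K⟦X⟧) : K⸨X⸩) +
        single (k + 1) 1 * ((↑(U ^ k) * d⁄dX K ↑U : K⟦X⟧) : K⸨X⸩) := by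
    rw [coe_mul, ofPowerSeries_X, derivative_single_mul, derivative_single, mul_zpow,
      ← RatFunc.single_zpow, derivative_coe, coe_mul, ← coe_unit_zpow, ← coe_unit_zpow,
      zpow_add_one₀ hU0, sub_self, Int.cast_one, mul_one, single_zero_one,
      show single (k + 1) (1 : K) = single k 1 * single 1 1 by rw [single_mul_single, mul_one]]
    ring
  rw [hsplit, HahnSeries.coeff_add, coeff_single_mul, coeff_single_mul, one_mul, one_mul]
  rcases lt_trichotomy k (-1) with hk | rfl | hk
  · obtain ⟨s, rfl⟩ : ∃ s : ℕ, k = -(s + 2) := ⟨(-k - 2).toNat, by omega⟩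
    rw [if_neg (by omega), show -((s : ℤ) + 2) + 1 = -((s : ℤ) + 1) by ring,
      show -1 - -((s : ℤ) + 2) = ((s + 1 : ℕ) : ℤ) by push_cast; ring,
      show -1 - (-((s : ℤ) + 1)) = (s : ℤ) by ring, coeff_coe_powerSeries, coeff_coe_powerSeries,
      coeff_succ_zpow_add_coeff_zpow_mul_derivative]
  · rw [if_pos rfl, neg_add_cancel, zpow_zero, Units.val_one, map_one,
      coeff_coe_of_neg _ (by norm_num), add_zero]
    simp
  · rw [if_neg hk.ne', coeff_coe_of_neg _ (by omega), coeff_coe_of_neg _ (by omega), add_zero]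

theorem coeff_neg_one_subst_mul_zpow_mul_derivative {F : K⟦X⟧} (hF0 : constantCoeff F = 0)
    (hF1 : coeff 1 F ≠ 0) (P : K⟦X⟧) (k : ℤ) :
    ((P.subst F : K⟦X⟧) * (F : K⸨X⸩) ^ k * derivative K (F : K⸨X⸩)).coeff (-1) =
      (P : K⸨X⸩).coeff (-k - 1) := by
  rcases lt_or_ge k 0 with hk | hk
  · obtain ⟨s, rfl⟩ : ∃ s : ℕ, k = -(s + 1) := ⟨(-k - 1).toNat, by omega⟩
    have hf0 := coe_ne_zero_of_coeff_one_ne_zero hF1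
    set Q := PowerSeries.mk fun i => coeff (i + (s + 1)) P
    have hterm : ∀ i ∈ Finset.range (s + 1), (((PowerSeries.C (coeff i P) * F ^ i : K⟦X⟧) :
        K⸨X⸩) * (F : K⸨X⸩) ^ (-((s : ℤ) + 1)) * derivative K (F : K⸨X⸩)).coeff (-1) =
        if i = s then coeff i P else 0 := by
      intro i _
      rw [map_mul, map_pow, ofPowerSeries_C, HahnSeries.C_apply, mul_assoc, mul_assoc,
        coeff_single_mul, sub_zero, ← mul_assoc, ← zpow_natCast, ← zpow_add₀ hf0,
        coeff_neg_one_zpow_mul_derivative hF0 hF1]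
      by_cases h : i = s
      · rw [if_pos (by omega), if_pos h, mul_one]
      · rw [if_neg (by omega), if_neg h, mul_zero]
    have htail : ((F ^ (s + 1) * Q.subst F : K⟦X⟧) : K⸨X⸩) *
        (F : K⸨X⸩) ^ (-((s : ℤ) + 1)) * derivative K (F : K⸨X⸩) =
        ((Q.subst F * d⁄dX K F : K⟦X⟧) : K⸨X⸩) := by
      rw [map_mul, map_mul, map_pow, derivative_coe, ← zpow_natCast, mul_comm (_ ^ _), mul_assoc,
        mul_assoc, ← mul_assoc (_ ^ _), ← zpow_add₀ hf0]
      push_cast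
      simp
    rw [subst_eq_sum_add_pow_mul (HasSubst.of_constantCoeff_zero' hF0) P (s + 1), map_add,
      add_mul, add_mul, HahnSeries.coeff_add, map_sum, Finset.sum_mul, Finset.sum_mul, coeff_sum,
      Finset.sum_congr rfl hterm, Finset.sum_ite_eq' (Finset.range (s + 1)) s,
      if_pos (Finset.self_mem_range_succ s), htail, coeff_coe_of_neg _ (by norm_num), add_zero,
      show -(-((s : ℤ) + 1)) - 1 = (s : ℤ) by ring, coeff_coe_powerSeries]
  · lift k to ℕ using hk
    rw [coeff_coe_of_neg _ (by omega), zpow_natCast, ← map_pow, derivative_coe, ← map_mul,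
      ← map_mul, coeff_coe_of_neg _ (by norm_num)]

theorem coeff_zpow_eq_coeff_neg_one_of_subst_eq_X {F G : K⟦X⟧} (hF0 : constantCoeff F = 0)
    (hF1 : coeff 1 F ≠ 0) (hG0 : constantCoeff G = 0) (hG1 : coeff 1 G ≠ 0)
    (hGF : G.subst F = X) (m n : ℤ) :
    ((G : K⸨X⸩) ^ m).coeff n =
      (single m 1 * (F : K⸨X⸩) ^ (-n - 1) * derivative K (F : K⸨X⸩)).coeff (-1) := by
  obtain ⟨U, rfl⟩ := exists_eq_X_mul_unit hG0 hG1.isUnit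
  have hF := HasSubst.of_constantCoeff_zero' hF0
  have hf0 := coe_ne_zero_of_coeff_one_ne_zero hF1
  let ψ : K⟦X⟧ →* K⸨X⸩ :=
    ((ofPowerSeries ℤ K).comp (substAlgHom hF).toRingHom).toMonoidHom
  have hψ : ∀ P, ψ P = ((P.subst F : K⟦X⟧) : K⸨X⸩) := fun P => by
    simp [ψ, coe_substAlgHom]
  have hψU : ψ U = single 1 1 * (F : K⸨X⸩)⁻¹ := by
    rw [hψ, eq_mul_inv_iff_mul_eq₀ hf0, ← ofPowerSeries_X, ← map_mul, mul_comm, ← hGF,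
      subst_mul hF, subst_X hF]
  have hUm : ((↑(U ^ m) : K⟦X⟧).subst F : K⸨X⸩) = single m 1 * (F : K⸨X⸩) ^ (-m) := by
    rw [← hψ, MonoidHom.map_units_zpow, hψU, mul_zpow, ← RatFunc.single_zpow, inv_zpow']
  rw [coe_mul, ofPowerSeries_X, mul_zpow, ← RatFunc.single_zpow, coe_unit_zpow, coeff_single_mul,
    one_mul, show n - m = -(m - n - 1) - 1 by ring,
    ← coeff_neg_one_subst_mul_zpow_mul_derivative hF0 hF1, hUm, mul_assoc (single m 1),
    ← zpow_add₀ hf0, show -m + (m - n - 1) = -n - 1 by ring, mul_assoc]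

theorem mul_coeff_zpow_neg_eq_mul_coeff_neg_one (f : K⸨X⸩) (m n : ℤ) :
    (m : K) * (f ^ (-n)).coeff (-m) =
      n * (single m 1 * f ^ (-n - 1) * derivative K f).coeff (-1) := by
  have hres := coeff_derivative_neg_one (single m (1 : K) * f ^ (-n))
  rw [derivative_mul, ← derivation_apply, Derivation.leibniz_zpow, derivation_apply,
    derivative_single, HahnSeries.coeff_add, smul_eq_mul, coeff_single_mul, HahnSeries.coeff_smul,
    one_mul, coeff_mul_single, show -1 - (m - 1) = -m by ring, zsmul_eq_mul] at hres
  rw [mul_assoc, coeff_single_mul, one_mul]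
  push_cast at hres
  linear_combination hres

end LaurentSeries

theorem lagrange_inversion_bracket_general {K : Type*} [Field K] (F G : PowerSeries K)
    (hF0 : PowerSeries.constantCoeff F = 0) (hF1 : PowerSeries.coeff 1 F ≠ 0)
    (hG0 : PowerSeries.constantCoeff G = 0)
    (hGF : psComp G F = PowerSeries.X)
    (m n : ℤ) :
    (n : K) * ((HahnSeries.ofPowerSeries ℤ K G : LaurentSeries K) ^ m).coeff n
      = (m : K) * ((HahnSeries.ofPowerSeries ℤ K F : LaurentSeries K) ^ (-n)).coeff (-m) := by
  have hG1 : coeff 1 G ≠ 0 :=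
    left_ne_zero_of_mul_eq_one (by rw [← coeff_one_psComp, hGF, coeff_X, if_pos rfl])
  rw [coeff_zpow_eq_coeff_neg_one_of_subst_eq_X hF0 hF1 hG0 hG1 (psComp_eq_subst hF0 G ▸ hGF),
    mul_coeff_zpow_neg_eq_mul_coeff_neg_one]

/-- Lagrange inversion in bracket form: if `F(z) = f₁z + f₂z² + ···` with `f₁ ≠ 0` and `G`
is its compositional inverse (`F(G(z)) = G(F(z)) = z`), then for all integers `m, n`:
`n·[z^n] G(z)^m = m·[z^{-m}] F(z)^{-n}`, powers being taken in the field of formal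
Laurent series. -/
theorem lagrange_inversion_bracket {K : Type*} [Field K] (F G : PowerSeries K)
    (hF0 : PowerSeries.constantCoeff F = 0) (hF1 : PowerSeries.coeff 1 F ≠ 0)
    (hG0 : PowerSeries.constantCoeff G = 0)
    (hFG : psComp F G = PowerSeries.X) (hGF : psComp G F = PowerSeries.X)
    (m n : ℤ) :
    (n : K) * ((HahnSeries.ofPowerSeries ℤ K G : LaurentSeries K) ^ m).coeff n
      = (m : K) * ((HahnSeries.ofPowerSeries ℤ K F : LaurentSeries K) ^ (-n)).coeff (-m) :=
  lagrange_inversion_bracket_general F G hF0 hF1 hG0 hGF m n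
end

section
/- Truncated product expansion: for any finite set C, nonnegative integer n, and elements x_c indexed by c ∈ C in a commutative ring, the sum over k < n of the coefficient of z^k in ∏_{c∈C}(1 + z·x_c) equals Σ_{B ⊆ C, |B| < n} ∏_{c∈B} x_c. Consequently, with x_c = e^{p(c)t} - 1, [z^n/(z-1)] ∏_{c∈C}(1 + z(e^{p(c)t}-1)) = Σ_{A ⊆ C, |A| < n} (-1)^{n-1-|A|} C(|C|-|A|-1, |C|-n)·e^{p(A)t}, where p(A) = Σ_{a∈A} p(a) and [z^n/(z-1)] G denotes g_{n-1} + g_{n-2} + ··· + g_0 for G = Σ g_k z^k. -/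
/-!
Expanding over subsets, `∏ c, (1 + z x_c) = ∑_B z^|B| ∏_{c ∈ B} x_c`, which gives the first
identity. For the second, write `1 + z (y_c - 1) = z y_c + (1 - z)`, so the product is
`∑_A e^{p(A) t} z^|A| (1 - z)^(|C| - |A|)`. The sum of the first `n` coefficients of
`z^a (1 - z)^m` is the partial alternating binomial sum
`∑_{j < n - a} (-1)^j C(m, j) = (-1)^(n - 1 - a) C(m - 1, n - 1 - a)`.
-/
open Polynomial

namespace Polynomial

open Finset

section Semiring

variable {R : Type*} [Semiring R]

theorem sum_range_coeff_sum {ι : Type*} (s : Finset ι) (f : ι → R[X]) (n : ℕ) :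
    ∑ k ∈ range n, (∑ i ∈ s, f i).coeff k = ∑ i ∈ s, ∑ k ∈ range n, (f i).coeff k := by
  simp only [finsetSum_coeff]
  exact sum_comm

theorem sum_range_coeff_C_mul (a : R) (q : R[X]) (n : ℕ) :
    ∑ k ∈ range n, (C a * q).coeff k = a * ∑ k ∈ range n, q.coeff k := by
  simp only [coeff_C_mul, mul_sum]

theorem sum_range_coeff_C_mul_X_pow (a : R) (b n : ℕ) :
    ∑ k ∈ range n, (C a * X ^ b).coeff k = if b < n then a else 0 := by
  simp only [coeff_C_mul_X_pow, sum_ite_eq', mem_range]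

theorem sum_range_coeff_X_pow_mul (q : R[X]) (b n : ℕ) :
    ∑ k ∈ range n, (X ^ b * q).coeff k = ∑ k ∈ range (n - b), q.coeff k := by
  simp only [coeff_X_pow_mul']
  rcases le_or_gt b n with hbn | hnb
  · obtain ⟨m, rfl⟩ := Nat.exists_eq_add_of_le hbn
    rw [sum_range_add, Nat.add_sub_cancel_left, sum_eq_zero fun k hk => if_neg (by simpa using hk)]
    simp
  · rw [Nat.sub_eq_zero_of_le hnb.le, sum_range_zero]
    exact sum_eq_zero fun k hk => if_neg (by simp at hk; omega)

end Semiring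

variable {α : Type*}

section CommSemiring

variable {R : Type*} [CommSemiring R]

theorem prod_one_add_C_mul_X (s : Finset α) (x : α → R) :
    ∏ c ∈ s, (1 + C (x c) * X) = ∑ B ∈ s.powerset, C (∏ c ∈ B, x c) * X ^ B.card := by
  rw [prod_one_add]
  refine sum_congr rfl fun B _ => ?_
  rw [prod_mul_distrib, prod_const, map_prod]

theorem sum_range_coeff_prod_one_add_C_mul_X (s : Finset α) (n : ℕ) (x : α → R) :
    ∑ k ∈ range n, (∏ c ∈ s, (1 + C (x c) * X)).coeff k
      = ∑ B ∈ s.powerset.filter (fun B => B.card < n), ∏ c ∈ B, x c := by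
  simp only [prod_one_add_C_mul_X, sum_range_coeff_sum, sum_range_coeff_C_mul_X_pow, sum_filter]

end CommSemiring

section CommRing

variable {R : Type*} [CommRing R]

theorem coeff_one_sub_X_pow (m k : ℕ) :
    ((1 - X : R[X]) ^ m).coeff k = (-1) ^ k * m.choose k := by
  have hexpand : (1 - X : R[X]) ^ m =
      ∑ j ∈ range (m + 1), C ((-1 : R) ^ j * m.choose j) * X ^ j := by
    rw [show (1 - X : R[X]) = C (-1) * X + 1 by simp [sub_eq_neg_add], add_pow]
    refine sum_congr rfl fun j _ => ?_
    simp only [one_pow, mul_one, mul_pow, C_mul, C_pow, map_natCast]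
    ring
  simp only [hexpand, finsetSum_coeff, coeff_C_mul_X_pow, sum_ite_eq]
  split_ifs with hk
  · rfl
  · rw [Nat.choose_eq_zero_of_lt (by simpa [Nat.lt_succ_iff] using hk), Nat.cast_zero, mul_zero]

theorem sum_range_coeff_one_sub_X_pow_succ (m j : ℕ) :
    ∑ k ∈ range (j + 1), ((1 - X : R[X]) ^ (m + 1)).coeff k = (-1) ^ j * m.choose j := by
  simp only [coeff_one_sub_X_pow]
  exact_mod_cast congrArg (Int.cast : ℤ → R) Int.alternating_sum_range_choose_eq_choose

theorem sum_range_coeff_X_pow_mul_one_sub_X_pow {a m n : ℕ} (hn : n ≤ a + m) :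
    ∑ k ∈ range n, (X ^ a * (1 - X : R[X]) ^ m).coeff k
      = if a < n then (-1) ^ (n - 1 - a) * ((m - 1).choose (a + m - n) : R) else 0 := by
  rw [sum_range_coeff_X_pow_mul]
  split_ifs with han
  · obtain ⟨j, hj⟩ : ∃ j, n - a = j + 1 := ⟨n - 1 - a, by omega⟩
    obtain ⟨l, rfl⟩ : ∃ l, m = l + 1 := ⟨m - 1, by omega⟩
    rw [hj, sum_range_coeff_one_sub_X_pow_succ, Nat.add_sub_cancel,
      Nat.choose_symm_of_eq_add (show l = j + (a + (l + 1) - n) by omega)]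
    congr 2
    omega
  · rw [Nat.sub_eq_zero_of_le (not_lt.mp han), sum_range_zero]

theorem prod_one_add_C_sub_one_mul_X [DecidableEq α] (s : Finset α) (y : α → R) :
    ∏ c ∈ s, (1 + C (y c - 1) * X)
      = ∑ A ∈ s.powerset, C (∏ c ∈ A, y c) * (X ^ A.card * (1 - X) ^ (s.card - A.card)) := by
  have hsplit : ∀ c ∈ s, 1 + C (y c - 1) * X = C (y c) * X + (1 - X) := fun c _ => by
    rw [C_sub, C_1]; ring
  rw [prod_congr rfl hsplit, prod_add]
  refine sum_congr rfl fun A hA => ?_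
  rw [prod_mul_distrib, prod_const, prod_const, card_sdiff_of_subset (mem_powerset.mp hA),
    map_prod]
  ring

end CommRing

end Polynomial

theorem truncated_product_expansion_general {α : Type*} (C : Finset α) (n : ℕ)
    (p : α → ℝ) (t : ℝ) (hnC : n ≤ C.card) :
    (∀ (R : Type) (_ : CommRing R) (x : α → R),
      ∑ k ∈ Finset.range n, (∏ c ∈ C, (1 + Polynomial.C (x c) * Polynomial.X)).coeff k
        = ∑ B ∈ C.powerset.filter (fun B => B.card < n), ∏ c ∈ B, x c)
    ∧ ∑ k ∈ Finset.range n,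
        (∏ c ∈ C, (1 + Polynomial.C (Real.exp (p c * t) - 1) * Polynomial.X)).coeff k
      = ∑ A ∈ C.powerset.filter (fun A => A.card < n),
          (-1 : ℝ) ^ (n - 1 - A.card) * ((C.card - A.card - 1).choose (C.card - n))
            * Real.exp ((∑ a ∈ A, p a) * t) := by
  classical
  refine ⟨fun R _ x => sum_range_coeff_prod_one_add_C_mul_X C n x, ?_⟩
  rw [prod_one_add_C_sub_one_mul_X, sum_range_coeff_sum, Finset.sum_filter]
  refine Finset.sum_congr rfl fun A hA => ?_
  have hAC : A.card ≤ C.card := Finset.card_le_card (Finset.mem_powerset.mp hA)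
  rw [sum_range_coeff_C_mul, sum_range_coeff_X_pow_mul_one_sub_X_pow (by omega),
    ← Real.exp_sum, ← Finset.sum_mul, Nat.add_sub_cancel' hAC]
  split_ifs <;> ring

/-- Truncated product expansion and its application to the coupon collector's problem.
First part: for any finite set `C`, `n`, and elements `x_c` in a commutative ring,
`Σ_{k<n} [z^k] ∏_{c∈C}(1 + z·x_c) = Σ_{B ⊆ C, |B| < n} ∏_{c∈B} x_c`.
Second part: with `x_c = e^{p(c)t} - 1`,
`[zⁿ/(z-1)] ∏_{c∈C}(1 + z(e^{p(c)t}-1))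
  = Σ_{A ⊆ C, |A| < n} (-1)^{n-1-|A|} C(|C|-|A|-1, |C|-n)·e^{p(A)t}`,
where `[zⁿ/(z-1)] G = g_{n-1} + g_{n-2} + ··· + g₀` and `p(A) = Σ_{a∈A} p(a)`. -/
theorem truncated_product_expansion {α : Type*} (C : Finset α) (n : ℕ)
    (p : α → ℝ) (t : ℝ) (hn : 0 < n) (hnC : n ≤ C.card) :
    (∀ (R : Type) (_ : CommRing R) (x : α → R),
      ∑ k ∈ Finset.range n, (∏ c ∈ C, (1 + Polynomial.C (x c) * Polynomial.X)).coeff k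
        = ∑ B ∈ C.powerset.filter (fun B => B.card < n), ∏ c ∈ B, x c)
    ∧ ∑ k ∈ Finset.range n,
        (∏ c ∈ C, (1 + Polynomial.C (Real.exp (p c * t) - 1) * Polynomial.X)).coeff k
      = ∑ A ∈ C.powerset.filter (fun A => A.card < n),
          (-1 : ℝ) ^ (n - 1 - A.card) * ((C.card - A.card - 1).choose (C.card - n))
            * Real.exp ((∑ a ∈ A, p a) * t) :=
  truncated_product_expansion_general C n p t hnC
end
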